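/- Let f be m-strongly convex and M-Lipschitz-differentiable, and suppose f(x) ≤ f(z). Then the deterministic LGD step x₊ = x - η(∇f(x) + λ(x - z)) with η ≤ 1/(2M), ηλ ≤ m/(2M), η√λ ≤ √m/(M√2) satisfies f(x₊) ≤ f(z). -/

import Mathlib

/-!
With `g = ∇f x` and `w = x - z`, the descent lemma for the `M`-Lipschitz gradient bounds
`f x₊` by `f x - (η - Mη²/2)‖g‖² - β⟪g, w⟫ + (Mη²λ²/2)‖w‖²` with `β = (η - Mη²)λ ≥ 0`, and
strong convexity gives `⟪g, w⟫ ≥ f x - f z + (m/2)‖w‖²`. Hence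
`f x₊ ≤ f z - (1 - β)(f z - f x)` up to nonpositive terms, and the step-size bounds make
`β ≤ ηλ ≤ m / (2M) ≤ 1`, since `m ≤ M` whenever the space is nontrivial.
-/

open scoped InnerProductSpace

variable {E : Type*} [NormedAddCommGroup E] [InnerProductSpace ℝ E] [CompleteSpace E]

theorem hasDerivAt_comp_add_smul {f : E → ℝ} (hf : Differentiable ℝ f) (x v : E) (t : ℝ) :
    HasDerivAt (fun s : ℝ => f (x + s • v)) ⟪gradient f (x + t • v), v⟫_ℝ t := by
  have hline : HasDerivAt (fun s : ℝ => x + s • v) v t := by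
    simpa using ((hasDerivAt_id t).smul_const v).const_add x
  exact (hf _).hasGradientAt.hasFDerivAt.comp_hasDerivAt t hline

theorem le_add_inner_gradient_add_sq_of_lipschitz_gradient {f : E → ℝ} {M : ℝ}
    (hf : Differentiable ℝ f) (hlip : ∀ x y, ‖gradient f x - gradient f y‖ ≤ M * ‖x - y‖)
    (x y : E) :
    f y ≤ f x + ⟪gradient f x, y - x⟫_ℝ + M / 2 * ‖y - x‖ ^ 2 := by
  set v := y - x
  set ψ : ℝ → ℝ := fun t => f (x + t • v) - t * ⟪gradient f x, v⟫_ℝ - M / 2 * t ^ 2 * ‖v‖ ^ 2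
  have hψ : ∀ t, HasDerivAt ψ
      (⟪gradient f (x + t • v), v⟫_ℝ - ⟪gradient f x, v⟫_ℝ - M * t * ‖v‖ ^ 2) t := by
    intro t
    have hquad := ((hasDerivAt_pow 2 t).const_mul (M / 2)).mul_const (‖v‖ ^ 2)
    refine (((hasDerivAt_comp_add_smul hf x v t).sub
      ((hasDerivAt_id t).mul_const ⟪gradient f x, v⟫_ℝ)).sub hquad).congr_deriv ?_
    simp only [one_mul, Nat.cast_ofNat]
    ring
  have hψ'_nonpos : ∀ t ∈ interior (Set.Ici (0 : ℝ)), deriv ψ t ≤ 0 := by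
    intro t ht
    rw [interior_Ici, Set.mem_Ioi] at ht
    rw [(hψ t).deriv, ← inner_sub_left, sub_nonpos]
    calc ⟪gradient f (x + t • v) - gradient f x, v⟫_ℝ
        ≤ ‖gradient f (x + t • v) - gradient f x‖ * ‖v‖ := real_inner_le_norm _ _
      _ ≤ M * ‖x + t • v - x‖ * ‖v‖ := by gcongr; exact hlip _ _
      _ = M * t * ‖v‖ ^ 2 := by
        rw [add_sub_cancel_left, norm_smul, Real.norm_of_nonneg ht.le]; ring
  have hanti : AntitoneOn ψ (Set.Ici 0) :=
    antitoneOn_of_deriv_nonpos (convex_Ici 0)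
      (fun t _ => (hψ t).continuousAt.continuousWithinAt)
      (fun t _ => (hψ t).differentiableAt.differentiableWithinAt) hψ'_nonpos
  have hψ10 : ψ 1 ≤ ψ 0 := hanti Set.self_mem_Ici (Set.mem_Ici.2 zero_le_one) zero_le_one
  simp only [ψ, v, one_smul, add_sub_cancel, zero_smul, add_zero] at hψ10
  linarith

theorem le_of_strongConvex_of_lipschitz_gradient [Nontrivial E] {f : E → ℝ} {m M : ℝ}
    (hconv : ∀ x y, f x + ⟪gradient f x, y - x⟫_ℝ + m / 2 * ‖y - x‖ ^ 2 ≤ f y)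
    (hlip : ∀ x y, ‖gradient f x - gradient f y‖ ≤ M * ‖x - y‖) :
    m ≤ M := by
  obtain ⟨v, hv⟩ := exists_ne (0 : E)
  have hmono : m * ‖v‖ ^ 2 ≤ ⟪gradient f v - gradient f 0, v⟫_ℝ := by
    have h₁ := hconv 0 v
    have h₂ := hconv v 0
    simp only [sub_zero, zero_sub, inner_neg_right, norm_neg] at h₁ h₂
    rw [inner_sub_left]
    linarith
  have hlip' : ⟪gradient f v - gradient f 0, v⟫_ℝ ≤ M * ‖v‖ ^ 2 :=
    calc _ ≤ ‖gradient f v - gradient f 0‖ * ‖v‖ := real_inner_le_norm _ _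
      _ ≤ M * ‖v - 0‖ * ‖v‖ := by gcongr; exact hlip _ _
      _ = M * ‖v‖ ^ 2 := by rw [sub_zero]; ring
  have hv2 : 0 < ‖v‖ ^ 2 := by positivity
  nlinarith

/-- One step of leader-guided descent from `x` towards the leader `z`. -/
noncomputable def lgdStep (f : E → ℝ) (η lam : ℝ) (x z : E) : E :=
  x - η • (gradient f x + lam • (x - z))

theorem lgdStep_le {f : E → ℝ} {M : ℝ} (hf : Differentiable ℝ f)
    (hlip : ∀ x y, ‖gradient f x - gradient f y‖ ≤ M * ‖x - y‖) (η lam : ℝ) (x z : E) :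
    f (lgdStep f η lam x z) ≤ f x - (η - M / 2 * η ^ 2) * ‖gradient f x‖ ^ 2
      - (η - M * η ^ 2) * lam * ⟪gradient f x, x - z⟫_ℝ
      + M / 2 * η ^ 2 * lam ^ 2 * ‖x - z‖ ^ 2 := by
  have hd := le_add_inner_gradient_add_sq_of_lipschitz_gradient hf hlip x (lgdStep f η lam x z)
  rw [lgdStep] at hd ⊢
  rw [sub_sub_cancel_left, inner_neg_right, norm_neg, inner_smul_right, inner_add_right,
    inner_smul_right, real_inner_self_eq_norm_sq, norm_smul, mul_pow, Real.norm_eq_abs, sq_abs,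
    norm_add_sq_real, inner_smul_right, norm_smul, mul_pow, Real.norm_eq_abs, sq_abs] at hd
  linarith

theorem lgd_stepSize_bounds {m M η lam : ℝ} (hM : 0 < M) (hmM : m ≤ M) (hη0 : 0 ≤ η)
    (hlam0 : 0 ≤ lam) (hη : η ≤ 1 / (2 * M)) (hηlam : η * lam ≤ m / (2 * M)) :
    0 ≤ η - M / 2 * η ^ 2 ∧ 0 ≤ (η - M * η ^ 2) * lam ∧ (η - M * η ^ 2) * lam ≤ 1 ∧
      M / 2 * η ^ 2 * lam ^ 2 ≤ (η - M * η ^ 2) * lam * (m / 2) := by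
  have hMη : M * η ≤ 1 / 2 := by rw [le_div_iff₀ (by positivity)] at hη; linarith
  have hMηlam : M * (η * lam) ≤ m / 2 := by rw [le_div_iff₀ (by positivity)] at hηlam; linarith
  have hηlam_half : η * lam ≤ 1 / 2 := le_of_mul_le_mul_left (by linarith) hM
  have hm0 : 0 ≤ m := by nlinarith [mul_nonneg hM.le (mul_nonneg hη0 hlam0)]
  have hMη2 : M * η ^ 2 ≤ η / 2 := by nlinarith
  refine ⟨by nlinarith, mul_nonneg (by linarith) hlam0, ?_, ?_⟩
  · nlinarith [mul_nonneg (mul_nonneg hM.le (sq_nonneg η)) hlam0]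
  · nlinarith [mul_le_mul_of_nonneg_left hMηlam (mul_nonneg hη0 hlam0),
      mul_le_mul_of_nonneg_right (by linarith : η / 2 ≤ η - M * η ^ 2)
        (by positivity : 0 ≤ lam * (m / 2))]

theorem apply_lgdStep_le_of_apply_le {f : E → ℝ} {m M η lam : ℝ} (hM : 0 < M)
    (hf : Differentiable ℝ f)
    (hconv : ∀ x y, f x + ⟪gradient f x, y - x⟫_ℝ + m / 2 * ‖y - x‖ ^ 2 ≤ f y)
    (hlip : ∀ x y, ‖gradient f x - gradient f y‖ ≤ M * ‖x - y‖)
    (hη0 : 0 ≤ η) (hlam0 : 0 ≤ lam) (hη : η ≤ 1 / (2 * M)) (hηlam : η * lam ≤ m / (2 * M))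
    {x z : E} (hxz : f x ≤ f z) :
    f (lgdStep f η lam x z) ≤ f z := by
  rcases subsingleton_or_nontrivial E with _ | _
  · rwa [Subsingleton.elim (lgdStep f η lam x z) x]
  obtain ⟨hα, hβ0, hβ1, hγ⟩ := lgd_stepSize_bounds hM
    (le_of_strongConvex_of_lipschitz_gradient hconv hlip) hη0 hlam0 hη hηlam
  have hinner : f x - f z + m / 2 * ‖x - z‖ ^ 2 ≤ ⟪gradient f x, x - z⟫_ℝ := by
    have := hconv x z
    rw [← neg_sub x z, inner_neg_right, norm_neg] at this
    linarith
  refine (lgdStep_le hf hlip η lam x z).trans ?_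
  linarith [mul_nonneg hβ0 (sub_nonneg.2 hinner), mul_nonneg (sub_nonneg.2 hβ1) (sub_nonneg.2 hxz),
    mul_nonneg hα (sq_nonneg ‖gradient f x‖), mul_le_mul_of_nonneg_right hγ (sq_nonneg ‖x - z‖)]

theorem stmt_17_general {n : ℕ} (f : EuclideanSpace ℝ (Fin n) → ℝ) (m M η lam : ℝ)
    (hM : 0 < M)
    (hdiff : Differentiable ℝ f)
    (hconv : ∀ x y, f x + ⟪gradient f x, y - x⟫_ℝ + m / 2 * ‖y - x‖ ^ 2 ≤ f y)
    (hlip : ∀ x y, ‖gradient f x - gradient f y‖ ≤ M * ‖x - y‖)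
    (hη0 : 0 ≤ η) (hlam0 : 0 ≤ lam)
    (hη : η ≤ 1 / (2 * M)) (hηlam : η * lam ≤ m / (2 * M))
    (x z : EuclideanSpace ℝ (Fin n)) (hxz : f x ≤ f z) :
    f (x - η • (gradient f x + lam • (x - z))) ≤ f z :=
  apply_lgdStep_le_of_apply_le hM hdiff hconv hlip hη0 hlam0 hη hηlam hxz

theorem stmt_17 {n : ℕ} (f : EuclideanSpace ℝ (Fin n) → ℝ) (m M η lam : ℝ)
    (hm : 0 < m) (hM : 0 < M)
    (hdiff : Differentiable ℝ f)
    (hconv : ∀ x y, f x + ⟪gradient f x, y - x⟫_ℝ + m / 2 * ‖y - x‖ ^ 2 ≤ f y)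
    (hlip : ∀ x y, ‖gradient f x - gradient f y‖ ≤ M * ‖x - y‖)
    (hη0 : 0 ≤ η) (hlam0 : 0 ≤ lam)
    (hη : η ≤ 1 / (2 * M)) (hηlam : η * lam ≤ m / (2 * M))
    (hηslam : η * Real.sqrt lam ≤ Real.sqrt m / (M * Real.sqrt 2))
    (x z : EuclideanSpace ℝ (Fin n)) (hxz : f x ≤ f z) :
    f (x - η • (gradient f x + lam • (x - z))) ≤ f z :=
  stmt_17_general f m M η lam hM hdiff hconv hlip hη0 hlam0 hη hηlam x z hxz
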